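/- arXiv:2403.04951 — 2 statements merged into one kernel-verified Lean document; each statement's English description precedes it below -/
import Mathlib

section
/- Let G = (V,E) be a directed graph with designated start s = v_1 (no incoming edges) and end t = v_n (no outgoing edges), n nodes and m edges, where every node except t has out-degree at least 1. If G has a Hamiltonian path from s to t, then the set T = C ∪ ⋃_{i=1}^{n−1} A_i of length-3 strings (where A_i = {A_{i,j}, B_{i,j} : 1 ≤ j ≤ δ(i)} with A_{i,j} = w_i v_{c(i,j)} w_i, B_{i,j} = v_{c(i,j)} w_i v_{c(i,j+1 mod δ(i))}, and C = {‡#w_1} ∪ {v_i # w_i : 2 ≤ i ≤ n−1} ∪ {v_n#$}) admits a common superstring of length exactly 2m + 3n. -/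
/-- The alphabet {‡, #, $} ∪ V ∪ W, with all symbols pairwise distinct. -/
abbrev Gam : Type := ℕ ⊕ ℕ ⊕ Fin 3

/-- node symbol v_i -/
def vv (i : ℕ) : Gam := Sum.inl i
/-- auxiliary symbol w_i -/
def ww (i : ℕ) : Gam := Sum.inr (Sum.inl i)
def dag : Gam := Sum.inr (Sum.inr 0)
def hash : Gam := Sum.inr (Sum.inr 1)
def dollar : Gam := Sum.inr (Sum.inr 2)

/-!
Follow the Hamiltonian path `p 0, …, p (n-1)`. The block of a non-final node `i = p k` is its
word `C_i`, ending in `w_i`, followed by `v_{c(i,q)} w_i v_{c(i,q+1)} w_i … v_{c(i,q+δ(i)-1)} w_i`,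
where `c(i,q) = p (k+1)` is the edge taken by the path. The next block starts with
`v_{p (k+1)} = v_{c(i,q+δ(i))}`, so the closed walk `w_i v_{c(i,q)} w_i … w_i v_{c(i,q+δ(i))}`
around all children of `i` occurs in the superstring, and with it every `A_{i,j}` and `B_{i,j}`.
The final node contributes only `C_{n-1}`, so the length is `∑ (3 + 2 δ(i)) + 3 = 2m + 3n`.
-/

section Words
variable {α : Type*}

theorem List.infix_flatMap_range_of_succ_lt (f : ℕ → List α) {r N : ℕ} (h : r + 1 < N) :
    f r ++ f (r + 1) <:+: (List.range N).flatMap f := by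
  obtain ⟨t, rfl⟩ : ∃ t, N = r + 2 + t := ⟨N - (r + 2), by omega⟩
  refine ⟨(List.range r).flatMap f, (List.range t).flatMap (fun x => f (r + 2 + x)), ?_⟩
  simp [List.range_add, List.range_succ, List.flatMap_map]

theorem Nat.exists_lt_add_mod_eq (q : ℕ) {d j : ℕ} (hj : j < d) : ∃ r < d, (q + r) % d = j := by
  refine ⟨(j + (d - q % d)) % d, Nat.mod_lt _ (by omega), ?_⟩
  have hq := Nat.mod_add_div q d
  have hlt := Nat.mod_lt q (show 0 < d by omega)
  rw [Nat.add_mod_mod, show q + (j + (d - q % d)) = j + d * (q / d + 1) by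
    rw [Nat.mul_succ]; omega, Nat.add_mul_mod_self_left, Nat.mod_eq_of_lt hj]

def loopWord (a : α) (f : ℕ → α) (q d : ℕ) : List α :=
  (List.range d).flatMap fun r => [f (q + r), a]

theorem length_loopWord (a : α) (f : ℕ → α) (q d : ℕ) : (loopWord a f q d).length = 2 * d := by
  simp [loopWord, List.length_flatMap, Nat.mul_comm]

theorem cons_loopWord_append (a : α) (f : ℕ → α) (q d : ℕ) :
    a :: loopWord a f q d ++ [f (q + d)] =
      (List.range (d + 1)).flatMap fun r => [a, f (q + r)] := by
  induction d with
  | zero => simp [loopWord]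
  | succ d ih =>
    rw [List.range_succ, List.flatMap_append, ← ih]
    simp [loopWord, List.range_succ]

theorem infix_cons_loopWord_append {a : α} {f : ℕ → α} {d j : ℕ} (hf : Function.Periodic f d)
    (hj : j < d) (q : ℕ) : [a, f j, a, f (j + 1)] <:+: a :: loopWord a f q d ++ [f (q + d)] := by
  obtain ⟨r, hr, hqr⟩ := Nat.exists_lt_add_mod_eq q hj
  have h₁ : f (q + r) = f j := by rw [← hf.map_mod_nat, hqr]
  have h₂ : f (q + (r + 1)) = f (j + 1) := by
    rw [← hf.map_mod_nat, ← Nat.add_assoc, Nat.add_mod, hqr, Nat.add_mod_mod, hf.map_mod_nat]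
  rw [cons_loopWord_append]
  simpa [h₁, h₂] using List.infix_flatMap_range_of_succ_lt (fun r => [a, f (q + r)])
    (show r + 1 < d + 1 by omega)

end Words

theorem Finset.sum_range_comp_of_existsUnique {M : Type*} [AddCommMonoid M] {n : ℕ} {p : ℕ → ℕ}
    (hp : ∀ x < n, ∃! k, k < n ∧ p k = x) (g : ℕ → M) :
    ∑ k ∈ Finset.range n, g (p k) = ∑ i ∈ Finset.range n, g i := by
  choose! e he _ using hp
  have hinj : Set.InjOn e (Finset.range n) := fun x hx y hy hxy => by
    rw [← (he x (Finset.mem_range.1 hx)).2, hxy, (he y (Finset.mem_range.1 hy)).2]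
  have himage : (Finset.range n).image e = Finset.range n :=
    Finset.eq_of_subset_of_card_le
      (Finset.image_subset_iff.2 fun x hx => Finset.mem_range.2 (he x (Finset.mem_range.1 hx)).1)
      (Finset.card_image_of_injOn hinj).ge
  calc ∑ k ∈ Finset.range n, g (p k) = ∑ k ∈ (Finset.range n).image e, g (p k) := by rw [himage]
    _ = ∑ x ∈ Finset.range n, g (p (e x)) := Finset.sum_image hinj
    _ = ∑ i ∈ Finset.range n, g i :=
      Finset.sum_congr rfl fun x hx => by rw [(he x (Finset.mem_range.1 hx)).2]

def cWord (n i : ℕ) : List Gam :=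
  if i = 0 then [dag, hash, ww 0]
  else if i = n - 1 then [vv i, hash, dollar]
  else [vv i, hash, ww i]

def nodeBlock (n : ℕ) (δ : ℕ → ℕ) (c : ℕ → ℕ → ℕ) (i q : ℕ) : List Gam :=
  cWord n i ++ if i = n - 1 then [] else loopWord (ww i) (vv ∘ c i) q (δ i)

def pathWord (n : ℕ) (δ : ℕ → ℕ) (c : ℕ → ℕ → ℕ) (p q : ℕ → ℕ) : List Gam :=
  (List.range n).flatMap fun k => nodeBlock n δ c (p k) (q k)

section
variable {n : ℕ} {δ : ℕ → ℕ} {c : ℕ → ℕ → ℕ}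

theorem length_nodeBlock (i q : ℕ) :
    (nodeBlock n δ c i q).length = 3 + if i = n - 1 then 0 else 2 * δ i := by
  unfold nodeBlock cWord
  split_ifs <;> simp [length_loopWord] <;> omega

theorem singleton_prefix_nodeBlock {i : ℕ} (hi : i ≠ 0) (q : ℕ) :
    [vv i] <+: nodeBlock n δ c i q := by
  unfold nodeBlock cWord
  split_ifs <;> simp_all

theorem infix_nodeBlock_append {i j : ℕ} (hi : i ≠ n - 1) (hc : Function.Periodic (c i) (δ i))
    (hj : j < δ i) (q : ℕ) :
    [ww i, vv (c i j), ww i, vv (c i (j + 1))] <:+: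
      nodeBlock n δ c i q ++ [vv (c i (q + δ i))] := by
  obtain ⟨u, hu⟩ : ∃ u, cWord n i = u ++ [ww i] := by
    unfold cWord
    split_ifs with h₀
    · exact ⟨[dag, hash], by rw [h₀]; rfl⟩
    · exact ⟨[vv i, hash], rfl⟩
  rw [nodeBlock, if_neg hi, hu]
  exact (infix_cons_loopWord_append (hc.comp vv) hj q).trans ⟨u, [], by simp⟩

variable {p q : ℕ → ℕ}

theorem length_pathWord (hp : ∀ x < n, ∃! k, k < n ∧ p k = x) :
    (pathWord n δ c p q).length = 2 * ∑ i ∈ Finset.range (n - 1), δ i + 3 * n := by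
  rw [pathWord, List.length_flatMap, ← Multiset.sum_coe, ← Multiset.map_coe, ← Multiset.range,
    ← Finset.range_val, ← Finset.sum_eq_multiset_sum]
  simp only [length_nodeBlock]
  rw [Finset.sum_range_comp_of_existsUnique hp (fun i => 3 + if i = n - 1 then 0 else 2 * δ i)]
  rcases n with _ | n
  · simp
  · rw [Finset.sum_range_succ, Finset.sum_add_distrib, Nat.add_sub_cancel,
      Finset.sum_ite_of_false fun i hi => (Finset.mem_range.1 hi).ne, Finset.mul_sum]
    simp
    ring

theorem cWord_infix_pathWord {k : ℕ} (hk : k < n) : cWord n (p k) <:+: pathWord n δ c p q :=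
  (List.prefix_append _ _).isInfix.trans
    (List.infix_of_mem_flatten (List.mem_map_of_mem (List.mem_range.2 hk)))

theorem edge_infix_pathWord {k j : ℕ} (hk : k + 1 < n) (hpk : p k ≠ n - 1) (hpk' : p (k + 1) ≠ 0)
    (hc : Function.Periodic (c (p k)) (δ (p k))) (hq : c (p k) (q k) = p (k + 1))
    (hj : j < δ (p k)) :
    [ww (p k), vv (c (p k) j), ww (p k), vv (c (p k) (j + 1))] <:+: pathWord n δ c p q := by
  have hblocks : nodeBlock n δ c (p k) (q k) ++ [vv (p (k + 1))] <:+: pathWord n δ c p q :=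
    ((List.prefix_append_right_inj _).2 (singleton_prefix_nodeBlock hpk' _)).isInfix.trans
      (List.infix_flatMap_range_of_succ_lt (fun k => nodeBlock n δ c (p k) (q k)) hk)
  rw [← hq, ← hc (q k)] at hblocks
  exact (infix_nodeBlock_append hpk hc hj (q k)).trans hblocks

end

theorem stmt_13_general (n m : ℕ)
    (δ : ℕ → ℕ) (c : ℕ → ℕ → ℕ)
    -- child indices are cyclic modulo δ(i)
    (hper : ∀ i < n - 1, ∀ j, c i (j + δ i) = c i j)
    -- m is the number of edges
    (hm : m = ∑ i ∈ Finset.range (n - 1), δ i)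
    -- a Hamiltonian path from s = 0 to t = n − 1
    (p : ℕ → ℕ)
    (hbij : ∀ x < n, ∃! k, k < n ∧ p k = x)
    (hstart : p 0 = 0) (hend : p (n - 1) = n - 1)
    (hstep : ∀ k < n - 1, ∃ j < δ (p k), c (p k) j = p (k + 1)) :
    -- the string set T
    let A : ℕ → ℕ → List Gam := fun i j => [ww i, vv (c i j), ww i]
    let B : ℕ → ℕ → List Gam := fun i j => [vv (c i j), ww i, vv (c i (j + 1))]
    let Cs : ℕ → List Gam := fun i =>
      if i = 0 then [dag, hash, ww 0]
      else if i = n - 1 then [vv i, hash, dollar]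
      else [vv i, hash, ww i]
    let T : Set (List Gam) :=
      {S | (∃ i < n, S = Cs i) ∨ (∃ i < n - 1, ∃ j < δ i, S = A i j ∨ S = B i j)}
    -- conclusion: a common superstring of length exactly 2m + 3n exists
    ∃ Q : List Gam, Q.length = 2 * m + 3 * n ∧ ∀ S ∈ T, S <:+: Q := by
  intro A B Cs T
  choose! q _ hq using hstep
  have hsucc : ∀ k < n - 1, p (k + 1) ≠ 0 := fun k hk h₀ =>
    k.succ_ne_zero ((hbij 0 (by omega)).unique ⟨by omega, h₀⟩ ⟨by omega, hstart⟩)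
  refine ⟨pathWord n δ c p q, by rw [length_pathWord hbij, hm], ?_⟩
  rintro S (⟨i, hi, rfl⟩ | ⟨i, hi, j, hj, rfl | rfl⟩)
  · obtain ⟨k, ⟨hk, rfl⟩, -⟩ := hbij i hi
    exact cWord_infix_pathWord hk
  all_goals
    obtain ⟨k, ⟨hkn, rfl⟩, -⟩ := hbij i (by omega)
    have hk : k < n - 1 := Nat.lt_of_le_of_ne (by omega) (by rintro rfl; rw [hend] at hi; omega)
    have hedge := edge_infix_pathWord (by omega) hi.ne (hsucc k hk) (hper _ hi) (hq k hk) hj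
  · exact List.IsInfix.trans ⟨[], [_], rfl⟩ hedge
  · exact List.IsInfix.trans ⟨[_], [], rfl⟩ hedge

/-- Gallant et al. reduction, existence direction: if G (nodes 0,…,n−1 with
start s = 0 and end t = n−2+1 = n−1, out-degrees δ, cyclic children c) has a
Hamiltonian path from s to t, then T = C ∪ ⋃ A_i has a common superstring of
length exactly 2m + 3n. -/
theorem stmt_13 (n m : ℕ) (hn : 2 ≤ n)
    (δ : ℕ → ℕ) (c : ℕ → ℕ → ℕ)
    -- every node except t has out-degree at least 1
    (hδ : ∀ i < n - 1, 1 ≤ δ i)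
    -- child indices are cyclic modulo δ(i)
    (hper : ∀ i < n - 1, ∀ j, c i (j + δ i) = c i j)
    -- children are nodes, and s = 0 has no incoming edges
    (hrange : ∀ i < n - 1, ∀ j, c i j < n) (hins : ∀ i < n - 1, ∀ j, c i j ≠ 0)
    -- m is the number of edges
    (hm : m = ∑ i ∈ Finset.range (n - 1), δ i)
    -- a Hamiltonian path from s = 0 to t = n − 1
    (p : ℕ → ℕ)
    (hbij : ∀ x < n, ∃! k, k < n ∧ p k = x)
    (hstart : p 0 = 0) (hend : p (n - 1) = n - 1)
    (hstep : ∀ k < n - 1, ∃ j < δ (p k), c (p k) j = p (k + 1)) :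
    -- the string set T
    let A : ℕ → ℕ → List Gam := fun i j => [ww i, vv (c i j), ww i]
    let B : ℕ → ℕ → List Gam := fun i j => [vv (c i j), ww i, vv (c i (j + 1))]
    let Cs : ℕ → List Gam := fun i =>
      if i = 0 then [dag, hash, ww 0]
      else if i = n - 1 then [vv i, hash, dollar]
      else [vv i, hash, ww i]
    let T : Set (List Gam) :=
      {S | (∃ i < n, S = Cs i) ∨ (∃ i < n - 1, ∃ j < δ i, S = A i j ∨ S = B i j)}
    -- conclusion: a common superstring of length exactly 2m + 3n exists
    ∃ Q : List Gam, Q.length = 2 * m + 3 * n ∧ ∀ S ∈ T, S <:+: Q :=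
  stmt_13_general n m δ c hper hm p hbij hstart hend hstep
end

section
/- In the encoding of the SODA reduction, for any symbol c from V ∪ W and any IDs i, j, k, the three wildcard strings f_{L,i}(c) = g_i(b(c)) g_i(b(c)̄) ◦^{ℓ'}, f_{M,j}(c) = g_j(b(c)̄) ◦^{ℓ'} g_j(b(c)), and f_{R,k}(c) = ◦^{ℓ'} g_k(b(c)) g_k(b(c)̄) (each of length 3ℓ') are pairwise compatible, and their merge f_{L,i}(c) ⋈ f_{M,j}(c) ⋈ f_{R,k}(c) has length 3ℓ' and contains no wildcard symbols. -/
/-- g_i maps bit 0 to the wildcard ◦ (`none`) and bit 1 to the ID symbol i. -/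
def gmap {β : Type*} (i : β) (s : List Bool) : List (Option β) :=
  s.map (fun bit => if bit then some i else none)

lemma gmap_length {β : Type*} (i : β) (s : List Bool) : (gmap i s).length = s.length := by
  simp [gmap]

lemma gmap_getD {β : Type*} (i : β) (s : List Bool) (t : ℕ) :
    (gmap i s).getD t none = if s.getD t false then some i else none := by
  by_cases h : t < s.length
  · rw [gmap, List.getD_eq_getElem _ _ (by simpa using h), List.getD_eq_getElem _ _ h]
    simp
  · rw [List.getD_eq_default _ _ (by rw [gmap_length]; omega),
        List.getD_eq_default _ _ (not_lt.mp h)]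
    simp

theorem stmt_18 {β : Type*} (ℓ' : ℕ) (b : List Bool) (hb : b.length = ℓ')
    (i j k : β) :
    -- b̄ is the bitwise complement, ◦^{ℓ'} the all-wildcard block
    let bbar := b.map not
    let pad : List (Option β) := List.replicate ℓ' none
    let fL := gmap i b ++ gmap i bbar ++ pad
    let fM := gmap j bbar ++ pad ++ gmap j b
    let fR := pad ++ gmap k b ++ gmap k bbar
    -- each has length 3ℓ'
    fL.length = 3 * ℓ' ∧ fM.length = 3 * ℓ' ∧ fR.length = 3 * ℓ' ∧
    -- they are pairwise compatible: no position carries two non-wildcards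
    (∀ t, ¬((fL.getD t none).isSome ∧ (fM.getD t none).isSome)) ∧
    (∀ t, ¬((fL.getD t none).isSome ∧ (fR.getD t none).isSome)) ∧
    (∀ t, ¬((fM.getD t none).isSome ∧ (fR.getD t none).isSome)) ∧
    -- their merge has length 3ℓ' and contains no wildcard symbols:
    -- every position t < 3ℓ' is non-wildcard in one of the three strings
    (∀ t < 3 * ℓ',
      (fL.getD t none).isSome ∨ (fM.getD t none).isSome ∨ (fR.getD t none).isSome) := by
  intro bbar pad fL fM fR
  have hbbar : bbar.length = ℓ' := by simp [bbar, hb]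
  have hpad : ∀ t, pad.getD t none = none := by
    intro t
    by_cases h : t < ℓ'
    · rw [List.getD_eq_getElem _ _ (by simpa [pad] using h)]; simp [pad]
    · exact List.getD_eq_default _ _ (by simpa [pad] using not_lt.mp h)
  have hbbarD : ∀ t, t < ℓ' → bbar.getD t false = !(b.getD t false) := by
    intro t ht
    rw [List.getD_eq_getElem _ _ (by omega : t < bbar.length),
        List.getD_eq_getElem _ _ (by omega : t < b.length)]
    simp [bbar]
  -- evaluate getD for each string
  have app3 : ∀ (x y z : List (Option β)) (t : ℕ),
      x.length = ℓ' → y.length = ℓ' →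
      (x ++ y ++ z).getD t none =
        if t < ℓ' then x.getD t none
        else if t < 2 * ℓ' then y.getD (t - ℓ') none
        else z.getD (t - 2 * ℓ') none := by
    intro x y z t hx hy
    rw [List.append_assoc]
    by_cases h1 : t < ℓ'
    · rw [List.getD_append _ _ _ _ (by omega), if_pos h1]
    · rw [List.getD_append_right _ _ _ _ (by omega), if_neg h1, hx]
      by_cases h2 : t < 2 * ℓ'
      · rw [List.getD_append _ _ _ _ (by omega), if_pos h2]
      · rw [List.getD_append_right _ _ _ _ (by omega), if_neg h2, hy]
        congr 1; omega
  have hL : ∀ t, fL.getD t none =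
      if t < ℓ' then (if b.getD t false then some i else none)
      else if t < 2 * ℓ' then (if bbar.getD (t - ℓ') false then some i else none)
      else none := by
    intro t
    rw [show fL = gmap i b ++ gmap i bbar ++ pad from rfl,
        app3 _ _ _ t (by simp [gmap_length, hb]) (by simp [gmap_length, hbbar]),
        gmap_getD, gmap_getD, hpad]
  have hM : ∀ t, fM.getD t none =
      if t < ℓ' then (if bbar.getD t false then some j else none)
      else if t < 2 * ℓ' then none
      else (if b.getD (t - 2 * ℓ') false then some j else none) := by
    intro t
    rw [show fM = gmap j bbar ++ pad ++ gmap j b from rfl,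
        app3 _ _ _ t (by simp [gmap_length, hbbar]) (by simp [pad]),
        gmap_getD, gmap_getD, hpad]
  have hR : ∀ t, fR.getD t none =
      if t < ℓ' then none
      else if t < 2 * ℓ' then (if b.getD (t - ℓ') false then some k else none)
      else (if bbar.getD (t - 2 * ℓ') false then some k else none) := by
    intro t
    rw [show fR = pad ++ gmap k b ++ gmap k bbar from rfl,
        app3 _ _ _ t (by simp [pad]) (by simp [gmap_length, hb]),
        gmap_getD, gmap_getD, hpad]
  refine ⟨by simp [fL, gmap_length, hb, hbbar, pad]; ring,
          by simp [fM, gmap_length, hb, hbbar, pad]; ring,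
          by simp [fR, gmap_length, hb, hbbar, pad]; ring, ?_, ?_, ?_, ?_⟩
  · intro t
    rw [hL t, hM t]
    by_cases h1 : t < ℓ'
    · simp only [if_pos h1, hbbarD t h1]
      cases b.getD t false <;> simp
    · by_cases h2 : t < 2 * ℓ' <;> simp [h1, h2]
  · intro t
    rw [hL t, hR t]
    by_cases h1 : t < ℓ'
    · simp [h1]
    · by_cases h2 : t < 2 * ℓ'
      · simp only [if_neg h1, if_pos h2, hbbarD (t - ℓ') (by omega)]
        cases b.getD (t - ℓ') false <;> simp
      · simp [h1, h2]
  · intro t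
    rw [hM t, hR t]
    by_cases h1 : t < ℓ'
    · simp [h1]
    · by_cases h2 : t < 2 * ℓ'
      · simp [h1, h2]
      · by_cases h3 : t < 3 * ℓ'
        · simp only [if_neg h1, if_neg h2, hbbarD (t - 2 * ℓ') (by omega)]
          cases b.getD (t - 2 * ℓ') false <;> simp
        · rw [List.getD_eq_default b _ (by omega), List.getD_eq_default bbar _ (by omega)]
          simp [h1, h2]
  · intro t ht
    rw [hL t, hM t, hR t]
    by_cases h1 : t < ℓ'
    · simp only [if_pos h1, hbbarD t h1]
      cases b.getD t false <;> simp
    · by_cases h2 : t < 2 * ℓ'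
      · simp only [if_neg h1, if_pos h2, hbbarD (t - ℓ') (by omega)]
        cases b.getD (t - ℓ') false <;> simp
      · simp only [if_neg h1, if_neg h2, hbbarD (t - 2 * ℓ') (by omega)]
        cases b.getD (t - 2 * ℓ') false <;> simp
end
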